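/- Let δ ∈ ℝ and let u : ℝ → ℂ be a Schwartz function. Define the gauge transform 𝒢(u)(x) := u(x)·exp(−δ·∂ₓ⁻¹(u u*)(x)). Then for every x ∈ ℝ, 𝒢(u)(x) · conj(𝒢(u)(−x)) = u(x) · conj(u(−x)); that is, writing v = 𝒢(u), one has v v* = u u*. -/
import Mathlib

open MeasureTheory

/-- The antiderivative `∂ₓ⁻¹ f (x) = ½(∫_{-∞}^x f − ∫_x^∞ f)`. -/
noncomputable def pinv (f : ℝ → ℂ) (x : ℝ) : ℂ :=
  (1 / 2 : ℂ) * ((∫ y in Set.Iic x, f y) - ∫ y in Set.Ici x, f y)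

/-- The gaugeT transform `𝒢(u) = u · exp(−δ ∂ₓ⁻¹(u u*))`, where `u*(x) = conj(u(−x))`. -/
noncomputable def gaugeT (δ : ℝ) (u : ℝ → ℂ) (x : ℝ) : ℂ :=
  u x * Complex.exp (-(δ : ℂ) * pinv (fun y => u y * (starRingEnd ℂ) (u (-y))) x)

lemma conj_pinv_neg (f : ℝ → ℂ) (hf : ∀ y, (starRingEnd ℂ) (f (-y)) = f y) (x : ℝ) :
    (starRingEnd ℂ) (pinv f (-x)) = - pinv f x := by
  have h1 : (∫ y in Set.Iic (-x), (starRingEnd ℂ) (f y)) = ∫ y in Set.Ioi x, f y := by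
    calc (∫ y in Set.Iic (-x), (starRingEnd ℂ) (f y))
        = ∫ y in Set.Iic (-x), (fun z => (starRingEnd ℂ) (f (-z))) (-y) := by
          simp
      _ = ∫ y in Set.Ioi x, (starRingEnd ℂ) (f (-y)) := by
          rw [show (∫ y in Set.Iic (-x), (fun z => (starRingEnd ℂ) (f (-z))) (-y)) =
            ∫ y in Set.Ioi (- -x), (fun z => (starRingEnd ℂ) (f (-z))) y from
            integral_comp_neg_Iic (-x) (fun z => (starRingEnd ℂ) (f (-z))), neg_neg]
      _ = ∫ y in Set.Ioi x, f y := by simp_rw [hf]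
  have h2 : (∫ y in Set.Ici (-x), (starRingEnd ℂ) (f y)) = ∫ y in Set.Iic x, f y := by
    calc (∫ y in Set.Ici (-x), (starRingEnd ℂ) (f y))
        = ∫ y in Set.Ioi (-x), (fun z => (starRingEnd ℂ) (f (-z))) (-y) := by
          rw [← integral_Ici_eq_integral_Ioi]; simp
      _ = ∫ y in Set.Iic x, (starRingEnd ℂ) (f (-y)) := by
          rw [show (∫ y in Set.Ioi (-x), (fun z => (starRingEnd ℂ) (f (-z))) (-y)) =
            ∫ y in Set.Iic (- -x), (fun z => (starRingEnd ℂ) (f (-z))) y from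
            integral_comp_neg_Ioi (-x) (fun z => (starRingEnd ℂ) (f (-z))), neg_neg]
      _ = ∫ y in Set.Iic x, f y := by simp_rw [hf]
  have hio : (∫ y in Set.Ioi x, f y) = ∫ y in Set.Ici x, f y :=
    (integral_Ici_eq_integral_Ioi).symm
  simp only [pinv, map_mul, map_sub, ← integral_conj, h1, h2, hio, map_div₀, map_one, map_ofNat]
  ring

/-- For Schwartz `u` and `v = 𝒢(u)`, one has `v v* = u u*`:
`𝒢(u)(x) conj(𝒢(u)(−x)) = u(x) conj(u(−x))` for every `x`. -/
theorem stmt_5 (δ : ℝ) (u : SchwartzMap ℝ ℂ) :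
    ∀ x : ℝ,
      gaugeT δ ⇑u x * (starRingEnd ℂ) (gaugeT δ ⇑u (-x))
        = u x * (starRingEnd ℂ) (u (-x)) := by
  intro x
  set f : ℝ → ℂ := fun y => u y * (starRingEnd ℂ) (u (-y)) with hfdef
  have hf : ∀ y, (starRingEnd ℂ) (f (-y)) = f y := by
    intro y; simp [hfdef, mul_comm]
  have hp := conj_pinv_neg f hf x
  simp only [gaugeT, map_mul, ← Complex.exp_conj, ← hfdef, map_neg, Complex.conj_ofReal, hp]
  rw [mul_mul_mul_comm, ← Complex.exp_add]
  ring_nf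
  simp [Complex.exp_zero]
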